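/- Let E be a finite-dimensional real inner product space, U : E → ℝ a continuously differentiable function, and F : E × E → E a continuous map satisfying F(q, 0) = 0 for all q and ⟨F(q, v), v⟩ < 0 whenever v ≠ 0. Suppose the first-order system (q', v') = (v, −∇U(q) + F(q, v)) on E × E has unique solutions (e.g. the right-hand side is locally Lipschitz), and let q : [0, ∞) → E be a solution of q'' = −∇U(q) + F(q, q') whose extended trajectory t ↦ (q(t), q'(t)) has precompact image in E × E. Then every ω-limit point (a, b) of the curve t ↦ (q(t), q'(t)) (i.e. every limit of a sequence (q(tₙ), q'(tₙ)) with tₙ → ∞) satisfies b = 0 and ∇U(a) = 0. -/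

import Mathlib

open scoped RealInnerProductSpace
open Filter Topology Set

section auxiliary

variable {E : Type*} [NormedAddCommGroup E] [InnerProductSpace ℝ E] [FiniteDimensional ℝ E]

private lemma gradient_continuous (U : E → ℝ) (hU : ContDiff ℝ 1 U) :
    Continuous (fun x : E => gradient U x) :=
  (InnerProductSpace.toDual ℝ E).symm.continuous.comp (hU.continuous_fderiv one_ne_zero)

private lemma energy_hasDerivAt (U : E → ℝ) (hU : ContDiff ℝ 1 U) (F : E → E → E)
    (q v : ℝ → E) (t : ℝ)
    (hqt : HasDerivAt q (v t) t)
    (hvt : HasDerivAt v (-gradient U (q t) + F (q t) (v t)) t) :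
    HasDerivAt (fun s => U (q s) + (1/2) * ⟪v s, v s⟫)
      (⟪F (q t) (v t), v t⟫) t := by
  have hd : DifferentiableAt ℝ U (q t) := (hU.differentiable one_ne_zero).differentiableAt
  have h1 : HasDerivAt (fun s => U (q s)) (⟪gradient U (q t), v t⟫) t := by
    have := hd.hasGradientAt.hasFDerivAt.comp_hasDerivAt t hqt
    rw [InnerProductSpace.toDual_apply_apply] at this
    exact this
  have h2 := (hvt.inner ℝ hvt).const_mul (1/2 : ℝ)
  have h3 := h1.add h2
  refine h3.congr_deriv ?_
  rw [inner_add_right, inner_neg_right, inner_add_left, inner_neg_left,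
    real_inner_comm (gradient U (q t)) (v t), real_inner_comm (F (q t) (v t)) (v t)]
  ring

/-- Step A: every ω-limit point has zero velocity. -/
private lemma velocity_limit_zero
    (U : E → ℝ) (hU : ContDiff ℝ 1 U)
    (F : E → E → E) (hFcont : Continuous fun p : E × E => F p.1 p.2)
    (hFdiss : ∀ q v : E, v ≠ 0 → ⟪F q v, v⟫ < 0)
    (q v : ℝ → E)
    (hq : ∀ t : ℝ, 0 ≤ t → HasDerivAt q (v t) t)
    (hv : ∀ t : ℝ, 0 ≤ t → HasDerivAt v (-gradient U (q t) + F (q t) (v t)) t)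
    (hcpt : IsCompact (closure ((fun t => (q t, v t)) '' Set.Ici (0 : ℝ))))
    (a b : E) (tn : ℕ → ℝ)
    (htn : Tendsto tn atTop atTop)
    (hlim : Tendsto (fun k => (q (tn k), v (tn k))) atTop (𝓝 (a, b))) :
    b = 0 := by
  by_contra hb
  set K := closure ((fun t => (q t, v t)) '' Set.Ici (0 : ℝ)) with hK
  have hmemK : ∀ t : ℝ, 0 ≤ t → (q t, v t) ∈ K := fun t ht => subset_closure ⟨t, ht, rfl⟩
  -- global speed bound M
  obtain ⟨M1, hM1⟩ := hcpt.exists_bound_of_continuousOn (continuous_snd.continuousOn)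
  have hΦc : Continuous (fun p : E × E => -gradient U p.1 + F p.1 p.2) :=
    ((gradient_continuous U hU).comp continuous_fst).neg.add hFcont
  obtain ⟨M2, hM2⟩ := hcpt.exists_bound_of_continuousOn hΦc.continuousOn
  set M : ℝ := max 1 (max M1 M2) with hM
  have hMpos : 0 < M := lt_of_lt_of_le one_pos (le_max_left _ _)
  have hvb : ∀ t : ℝ, 0 ≤ t → ‖v t‖ ≤ M := fun t ht =>
    (hM1 _ (hmemK t ht)).trans ((le_max_left M1 M2).trans (le_max_right _ _))
  have hΦb : ∀ t : ℝ, 0 ≤ t → ‖-gradient U (q t) + F (q t) (v t)‖ ≤ M := fun t ht =>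
    (hM2 _ (hmemK t ht)).trans ((le_max_right M1 M2).trans (le_max_right _ _))
  -- Lipschitz bounds on the trajectory
  have hqLip : ∀ t s : ℝ, 0 ≤ t → t ≤ s → ‖q s - q t‖ ≤ M * (s - t) := by
    intro t s ht hts
    have := Convex.norm_image_sub_le_of_norm_hasDerivWithin_le
      (f := q) (f' := v) (s := Icc t s) (C := M)
      (fun x hx => (hq x (ht.trans hx.1)).hasDerivWithinAt)
      (fun x hx => hvb x (ht.trans hx.1)) (convex_Icc t s)
      (left_mem_Icc.2 hts) (right_mem_Icc.2 hts)
    simpa [abs_of_nonneg (sub_nonneg.2 hts)] using this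
  have hvLip : ∀ t s : ℝ, 0 ≤ t → t ≤ s → ‖v s - v t‖ ≤ M * (s - t) := by
    intro t s ht hts
    have := Convex.norm_image_sub_le_of_norm_hasDerivWithin_le
      (f := v) (f' := fun x => -gradient U (q x) + F (q x) (v x)) (s := Icc t s) (C := M)
      (fun x hx => (hv x (ht.trans hx.1)).hasDerivWithinAt)
      (fun x hx => hΦb x (ht.trans hx.1)) (convex_Icc t s)
      (left_mem_Icc.2 hts) (right_mem_Icc.2 hts)
    simpa [abs_of_nonneg (sub_nonneg.2 hts)] using this
  -- the dissipation rate near (a, b)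
  set δ : ℝ := -⟪F a b, b⟫ / 2 with hδdef
  have hδpos : 0 < δ := by
    have := hFdiss a b hb
    simp only [hδdef]
    linarith
  have hGc : Continuous (fun p : E × E => ⟪F p.1 p.2, p.2⟫) := hFcont.inner continuous_snd
  have hopen : {p : E × E | ⟪F p.1 p.2, p.2⟫ < -δ} ∈ 𝓝 (a, b) := by
    have h1 : IsOpen {p : E × E | ⟪F p.1 p.2, p.2⟫ < -δ} :=
      isOpen_lt hGc continuous_const
    refine h1.mem_nhds ?_
    have := hFdiss a b hb
    simp only [mem_setOf_eq, hδdef]; linarith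
  obtain ⟨ε, hεpos, hεball⟩ := Metric.mem_nhds_iff.1 hopen
  set σ : ℝ := ε / (4 * M) with hσdef
  have hσpos : 0 < σ := by positivity
  -- the energy function
  set H : ℝ → ℝ := fun t => U (q t) + (1/2) * ⟪v t, v t⟫ with hHdef
  have hHd : ∀ t : ℝ, 0 ≤ t → HasDerivAt H (⟪F (q t) (v t), v t⟫) t := fun t ht =>
    energy_hasDerivAt U hU F q v t (hq t ht) (hv t ht)
  have hHanti : AntitoneOn H (Ici (0:ℝ)) := by
    apply antitoneOn_of_deriv_nonpos (convex_Ici 0)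
    · exact fun t ht => (hHd t ht).continuousAt.continuousWithinAt
    · intro t ht
      rw [interior_Ici] at ht
      exact ((hHd t ht.le).differentiableAt).differentiableWithinAt
    · intro t ht
      rw [interior_Ici] at ht
      rw [(hHd t ht.le).deriv]
      rcases eq_or_ne (v t) 0 with h | h
      · simp [h]
      · exact (hFdiss _ _ h).le
  -- lower bound for the energy
  have hfc : Continuous (fun p : E × E => U p.1 + (1/2) * ⟪p.2, p.2⟫) :=
    (hU.continuous.comp continuous_fst).add (continuous_const.mul (continuous_snd.inner continuous_snd))
  obtain ⟨C, hC⟩ := hcpt.exists_bound_of_continuousOn hfc.continuousOn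
  have hHlb : ∀ t : ℝ, 0 ≤ t → -C ≤ H t := by
    intro t ht
    have h2 : |U (q t) + (1/2) * ⟪v t, v t⟫| ≤ C := by
      simpa [Real.norm_eq_abs] using hC _ (hmemK t ht)
    simp only [hHdef]
    linarith [(abs_le.1 h2).1]
  -- extended energy and its limit
  set Hx : ℝ → ℝ := fun t => H (max t 0) with hHx
  have hHxanti : Antitone Hx := fun s t hst =>
    hHanti (le_max_right s 0) (le_max_right t 0) (max_le_max hst le_rfl)
  have hHxbdd : BddBelow (range Hx) := ⟨-C, by rintro x ⟨t, rfl⟩; exact hHlb _ (le_max_right t 0)⟩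
  set L : ℝ := ⨅ t, Hx t with hL
  have hHxlim : Tendsto Hx atTop (𝓝 L) := tendsto_atTop_ciInf hHxanti hHxbdd
  have htn0 : ∀ᶠ n in atTop, (0:ℝ) ≤ tn n := htn.eventually_ge_atTop 0
  have hlim1 : Tendsto (fun n => H (tn n)) atTop (𝓝 L) := by
    apply (hHxlim.comp htn).congr'
    filter_upwards [htn0] with n hn
    simp [hHx, max_eq_left hn]
  have htnσ : Tendsto (fun n => tn n + σ) atTop atTop := tendsto_atTop_add_const_right _ _ htn
  have hlim2 : Tendsto (fun n => H (tn n + σ)) atTop (𝓝 L) := by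
    apply (hHxlim.comp htnσ).congr'
    filter_upwards [htn0] with n hn
    have h3 : (0:ℝ) ≤ tn n + σ := by linarith [hσpos.le]
    simp [hHx, max_eq_left h3]
  have hMσ : M * σ = ε / 4 := by
    rw [hσdef]; field_simp
  -- eventual decrement of the energy
  have hdec : ∀ᶠ n in atTop, H (tn n + σ) ≤ H (tn n) - δ * σ := by
    filter_upwards [htn0,
      eventually_atTop.2 (Metric.tendsto_atTop.1 hlim (ε/2) (by positivity))] with n hn hd
    set t₀ := tn n with ht₀
    have hball : ∀ s ∈ Icc t₀ (t₀ + σ), (q s, v s) ∈ Metric.ball (a, b) ε := by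
      intro s hs
      have hqa : dist (q t₀) a ≤ dist ((q t₀), (v t₀)) (a, b) := by
        rw [Prod.dist_eq]; exact le_max_left _ _
      have hvb' : dist (v t₀) b ≤ dist ((q t₀), (v t₀)) (a, b) := by
        rw [Prod.dist_eq]; exact le_max_right _ _
      have hMs : M * (s - t₀) ≤ ε / 4 := by
        rw [← hMσ]
        exact mul_le_mul_of_nonneg_left (by linarith [hs.2]) hMpos.le
      have h1 : dist (q s) a < ε := by
        calc dist (q s) a ≤ dist (q s) (q t₀) + dist (q t₀) a := dist_triangle _ _ _
          _ < ε := by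
              rw [dist_eq_norm]
              have := hqLip t₀ s hn hs.1
              linarith
      have h2 : dist (v s) b < ε := by
        calc dist (v s) b ≤ dist (v s) (v t₀) + dist (v t₀) b := dist_triangle _ _ _
          _ < ε := by
              rw [dist_eq_norm]
              have := hvLip t₀ s hn hs.1
              linarith
      rw [Metric.mem_ball, Prod.dist_eq]
      exact max_lt h1 h2
    have hG : AntitoneOn (fun s => H s + δ * s) (Icc t₀ (t₀ + σ)) := by
      have hGd : ∀ s : ℝ, 0 ≤ s → HasDerivAt (fun s => H s + δ * s)
          (⟪F (q s) (v s), v s⟫ + δ) s := by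
        intro s hs
        have hlin : HasDerivAt (fun s : ℝ => δ * s) δ s := by
          simpa using (hasDerivAt_id s).const_mul δ
        exact (hHd s hs).add hlin
      apply antitoneOn_of_deriv_nonpos (convex_Icc _ _)
      · exact fun s hs => (hGd s (hn.trans hs.1)).continuousAt.continuousWithinAt
      · intro s hs
        rw [interior_Icc] at hs
        exact (hGd s (hn.trans hs.1.le)).differentiableAt.differentiableWithinAt
      · intro s hs
        rw [interior_Icc] at hs
        rw [(hGd s (hn.trans hs.1.le)).deriv]
        have := hεball (hball s ⟨hs.1.le, hs.2.le⟩)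
        simp only [mem_setOf_eq] at this
        linarith
    have h9 : H (t₀ + σ) + δ * (t₀ + σ) ≤ H t₀ + δ * t₀ :=
      hG (left_mem_Icc.2 (by linarith)) (right_mem_Icc.2 (by linarith)) (by linarith)
    linarith
  have hfin : L ≤ L - δ * σ :=
    le_of_tendsto_of_tendsto hlim2 (hlim1.sub tendsto_const_nhds) hdec
  nlinarith [mul_pos hδpos hσpos]

end auxiliary

set_option maxHeartbeats 1000000 in
/-- **Proposition 6.1, finite-dimensional form.** For a dissipative
mechanical system `q'' = -∇U(q) + F(q, q')` on a finite-dimensional real inner product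
space, with `F(q,0) = 0`, `⟪F(q,v), v⟫ < 0` for `v ≠ 0`, unique solutions of the
associated first-order system, and a trajectory `t ↦ (q(t), q'(t))` with precompact
image, every ω-limit point `(a, b)` satisfies `b = 0` and `∇U(a) = 0`. -/
theorem omega_limit_points_are_critical
    {E : Type*} [NormedAddCommGroup E] [InnerProductSpace ℝ E] [FiniteDimensional ℝ E]
    (U : E → ℝ) (hU : ContDiff ℝ 1 U)
    (F : E → E → E) (hFcont : Continuous fun p : E × E => F p.1 p.2)
    (hF0 : ∀ q : E, F q 0 = 0)
    (hFdiss : ∀ q v : E, v ≠ 0 → ⟪F q v, v⟫ < 0)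
    (huniq : ∀ y z : ℝ → E × E,
      (∀ t : ℝ, HasDerivAt y ((y t).2, -gradient U (y t).1 + F (y t).1 (y t).2) t) →
      (∀ t : ℝ, HasDerivAt z ((z t).2, -gradient U (z t).1 + F (z t).1 (z t).2) t) →
      y 0 = z 0 → y = z)
    (q v : ℝ → E)
    (hq : ∀ t : ℝ, 0 ≤ t → HasDerivAt q (v t) t)
    (hv : ∀ t : ℝ, 0 ≤ t → HasDerivAt v (-gradient U (q t) + F (q t) (v t)) t)
    (hcpt : IsCompact (closure ((fun t => (q t, v t)) '' Set.Ici (0 : ℝ))))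
    (a b : E) (tn : ℕ → ℝ)
    (htn : Filter.Tendsto tn Filter.atTop Filter.atTop)
    (hlim : Filter.Tendsto (fun k => (q (tn k), v (tn k))) Filter.atTop (nhds (a, b))) :
    b = 0 ∧ gradient U a = 0 := by
  have hb0 : b = 0 := velocity_limit_zero U hU F hFcont hFdiss q v hq hv hcpt a b tn htn hlim
  subst hb0
  refine ⟨rfl, ?_⟩
  by_contra hg
  set g : E := gradient U a with hgdef
  have hgpos : 0 < ‖g‖ := norm_pos_iff.2 hg
  set K := closure ((fun t => (q t, v t)) '' Set.Ici (0 : ℝ)) with hK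
  have hmemK : ∀ t : ℝ, 0 ≤ t → (q t, v t) ∈ K := fun t ht => subset_closure ⟨t, ht, rfl⟩
  obtain ⟨M1, hM1⟩ := hcpt.exists_bound_of_continuousOn (continuous_snd.continuousOn)
  have hΦc : Continuous (fun p : E × E => -gradient U p.1 + F p.1 p.2) :=
    ((gradient_continuous U hU).comp continuous_fst).neg.add hFcont
  obtain ⟨M2, hM2⟩ := hcpt.exists_bound_of_continuousOn hΦc.continuousOn
  set M : ℝ := max 1 (max M1 M2) with hM
  have hMpos : 0 < M := lt_of_lt_of_le one_pos (le_max_left _ _)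
  have hvb : ∀ t : ℝ, 0 ≤ t → ‖v t‖ ≤ M := fun t ht =>
    (hM1 _ (hmemK t ht)).trans ((le_max_left M1 M2).trans (le_max_right _ _))
  have hΦb : ∀ t : ℝ, 0 ≤ t → ‖-gradient U (q t) + F (q t) (v t)‖ ≤ M := fun t ht =>
    (hM2 _ (hmemK t ht)).trans ((le_max_right M1 M2).trans (le_max_right _ _))
  have hqLip : ∀ t s : ℝ, 0 ≤ t → t ≤ s → ‖q s - q t‖ ≤ M * (s - t) := by
    intro t s ht hts
    have := Convex.norm_image_sub_le_of_norm_hasDerivWithin_le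
      (f := q) (f' := v) (s := Icc t s) (C := M)
      (fun x hx => (hq x (ht.trans hx.1)).hasDerivWithinAt)
      (fun x hx => hvb x (ht.trans hx.1)) (convex_Icc t s)
      (left_mem_Icc.2 hts) (right_mem_Icc.2 hts)
    simpa [abs_of_nonneg (sub_nonneg.2 hts)] using this
  have hvLip : ∀ t s : ℝ, 0 ≤ t → t ≤ s → ‖v s - v t‖ ≤ M * (s - t) := by
    intro t s ht hts
    have := Convex.norm_image_sub_le_of_norm_hasDerivWithin_le
      (f := v) (f' := fun x => -gradient U (q x) + F (q x) (v x)) (s := Icc t s) (C := M)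
      (fun x hx => (hv x (ht.trans hx.1)).hasDerivWithinAt)
      (fun x hx => hΦb x (ht.trans hx.1)) (convex_Icc t s)
      (left_mem_Icc.2 hts) (right_mem_Icc.2 hts)
    simpa [abs_of_nonneg (sub_nonneg.2 hts)] using this
  -- continuity of the right-hand side at (a, 0), whose value there is -g
  have hopen : {p : E × E | ‖(-gradient U p.1 + F p.1 p.2) + g‖ < ‖g‖/2} ∈ 𝓝 (a, (0:E)) := by
    have h1 : IsOpen {p : E × E | ‖(-gradient U p.1 + F p.1 p.2) + g‖ < ‖g‖/2} :=
      isOpen_lt (hΦc.add continuous_const).norm continuous_const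
    refine h1.mem_nhds ?_
    simp only [mem_setOf_eq, hF0 a, add_zero, neg_add_cancel, norm_zero, ← hgdef]
    positivity
  obtain ⟨ε, hεpos, hεball⟩ := Metric.mem_nhds_iff.1 hopen
  set τ : ℝ := ε / (4 * M) with hτdef
  have hτpos : 0 < τ := by positivity
  have hMτ : M * τ = ε / 4 := by rw [hτdef]; field_simp
  set η : ℝ := min (ε/4) (τ * ‖g‖ / 4) with hηdef
  have hηpos : 0 < η := lt_min (by positivity) (by positivity)
  obtain ⟨N1, hN1⟩ := Metric.tendsto_atTop.1 hlim η hηpos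
  obtain ⟨N2, hN2⟩ := eventually_atTop.1 (htn.eventually_ge_atTop 0)
  set NN : ℕ := max N1 N2 with hNN
  set sn : ℕ → ℝ := fun n => tn (n + NN) + τ with hsn
  -- the key kinetic-energy pickup estimate
  have hkey : ∀ n : ℕ, 0 ≤ sn n ∧ τ * ‖g‖ / 4 ≤ ‖v (sn n)‖ := by
    intro n
    set t₀ : ℝ := tn (n + NN) with ht₀
    have ht₀0 : 0 ≤ t₀ := hN2 _ (le_trans (le_max_right N1 N2) (Nat.le_add_left NN n))
    have hd : dist (q t₀, v t₀) (a, (0:E)) < η :=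
      hN1 _ (le_trans (le_max_left N1 N2) (Nat.le_add_left NN n))
    have hqd : dist (q t₀) a < η := lt_of_le_of_lt (by rw [Prod.dist_eq]; exact le_max_left _ _) hd
    have hvd : ‖v t₀‖ < η := by
      have := lt_of_le_of_lt (by rw [Prod.dist_eq]; exact le_max_right _ _ :
        dist (v t₀) (0:E) ≤ dist (q t₀, v t₀) (a, (0:E))) hd
      simpa using this
    have hηε : η ≤ ε/4 := min_le_left _ _
    have hηg : η ≤ τ * ‖g‖ / 4 := min_le_right _ _
    -- the trajectory stays in the ε-ball around (a,0) during [t₀, t₀+τ]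
    have hball : ∀ s ∈ Icc t₀ (t₀ + τ),
        ‖(-gradient U (q s) + F (q s) (v s)) + g‖ < ‖g‖/2 := by
      intro s hs
      have hMs : M * (s - t₀) ≤ ε / 4 := by
        rw [← hMτ]
        exact mul_le_mul_of_nonneg_left (by linarith [hs.2]) hMpos.le
      have h1 : dist (q s) a < ε := by
        calc dist (q s) a ≤ dist (q s) (q t₀) + dist (q t₀) a := dist_triangle _ _ _
          _ < ε := by
              rw [dist_eq_norm]
              have := hqLip t₀ s ht₀0 hs.1
              linarith
      have h2 : dist (v s) (0:E) < ε := by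
        calc dist (v s) 0 ≤ dist (v s) (v t₀) + dist (v t₀) 0 := dist_triangle _ _ _
          _ < ε := by
              rw [dist_eq_norm, dist_eq_norm, sub_zero]
              have := hvLip t₀ s ht₀0 hs.1
              linarith
      have hmem2 : (q s, v s) ∈ Metric.ball (a, (0:E)) ε := by
        rw [Metric.mem_ball, Prod.dist_eq]
        show max (dist (q s) a) (dist (v s) (0:E)) < ε
        exact max_lt h1 h2
      exact hεball hmem2
    -- hence ⟪v', g⟫ ≤ -‖g‖²/2 on the interval
    have hinner : ∀ s ∈ Icc t₀ (t₀ + τ),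
        ⟪-gradient U (q s) + F (q s) (v s), g⟫ ≤ -(‖g‖^2/2) := by
      intro s hs
      set w := -gradient U (q s) + F (q s) (v s) with hw
      have h1 : ⟪w + g, g⟫ ≤ ‖w + g‖ * ‖g‖ := real_inner_le_norm _ _
      have h2 : ‖w + g‖ * ‖g‖ ≤ (‖g‖/2) * ‖g‖ :=
        mul_le_mul_of_nonneg_right (hball s hs).le (norm_nonneg _)
      have h3 : ⟪w + g, g⟫ = ⟪w, g⟫ + ‖g‖^2 := by
        rw [inner_add_left, real_inner_self_eq_norm_sq]
      nlinarith
    -- monotonicity of ⟪v s, g⟫ + ‖g‖²/2 ⋅ s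
    have hφd : ∀ s : ℝ, 0 ≤ s → HasDerivAt (fun s => ⟪v s, g⟫ + (‖g‖^2/2) * s)
        (⟪-gradient U (q s) + F (q s) (v s), g⟫ + ‖g‖^2/2) s := by
      intro s hs
      have h1 : HasDerivAt (fun s => ⟪v s, g⟫)
          (⟪-gradient U (q s) + F (q s) (v s), g⟫) s := by
        have := (hv s hs).inner ℝ (hasDerivAt_const s g)
        simpa using this
      have h2 : HasDerivAt (fun s : ℝ => (‖g‖^2/2) * s) (‖g‖^2/2) s := by
        simpa using (hasDerivAt_id s).const_mul (‖g‖^2/2)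
      exact h1.add h2
    have hφanti : AntitoneOn (fun s => ⟪v s, g⟫ + (‖g‖^2/2) * s) (Icc t₀ (t₀ + τ)) := by
      apply antitoneOn_of_deriv_nonpos (convex_Icc _ _)
      · exact fun s hs => (hφd s (ht₀0.trans hs.1)).continuousAt.continuousWithinAt
      · intro s hs
        rw [interior_Icc] at hs
        exact (hφd s (ht₀0.trans hs.1.le)).differentiableAt.differentiableWithinAt
      · intro s hs
        rw [interior_Icc] at hs
        rw [(hφd s (ht₀0.trans hs.1.le)).deriv]
        have := hinner s ⟨hs.1.le, hs.2.le⟩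
        linarith
    have hmono : ⟪v (t₀ + τ), g⟫ + (‖g‖^2/2) * (t₀ + τ) ≤ ⟪v t₀, g⟫ + (‖g‖^2/2) * t₀ :=
      hφanti (left_mem_Icc.2 (by linarith)) (right_mem_Icc.2 (by linarith)) (by linarith)
    have hvt₀g : ⟪v t₀, g⟫ ≤ ‖v t₀‖ * ‖g‖ := real_inner_le_norm _ _
    have hvt₀g2 : ‖v t₀‖ * ‖g‖ ≤ (τ * ‖g‖ / 4) * ‖g‖ :=
      mul_le_mul_of_nonneg_right (by linarith) (norm_nonneg _)
    have hfinal : ⟪v (t₀ + τ), g⟫ ≤ -(τ * ‖g‖^2 / 4) := by nlinarith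
    have habs : -⟪v (t₀ + τ), g⟫ ≤ ‖v (t₀ + τ)‖ * ‖g‖ := by
      have := abs_real_inner_le_norm (v (t₀ + τ)) g
      have h1 := neg_abs_le ⟪v (t₀ + τ), g⟫
      linarith
    constructor
    · simp only [hsn]; linarith
    · have h6 : τ * ‖g‖^2 / 4 ≤ ‖v (t₀ + τ)‖ * ‖g‖ := by linarith
      have h7 : (τ * ‖g‖ / 4) * ‖g‖ ≤ ‖v (t₀ + τ)‖ * ‖g‖ := by nlinarith
      have := le_of_mul_le_mul_right h7 hgpos
      simpa [hsn] using this
  -- extract a convergent subsequence of the shifted trajectory points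
  have humem : ∀ n : ℕ, (q (sn n), v (sn n)) ∈ K := fun n => hmemK _ (hkey n).1
  obtain ⟨p, hpK, ψ, hψmono, hψtend⟩ := hcpt.tendsto_subseq humem
  have hsn_top : Tendsto sn atTop atTop := by
    apply tendsto_atTop_add_const_right
    exact htn.comp (tendsto_add_atTop_nat NN)
  have hzero : p.2 = 0 := by
    apply velocity_limit_zero U hU F hFcont hFdiss q v hq hv hcpt p.1 p.2 (sn ∘ ψ)
    · exact hsn_top.comp hψmono.tendsto_atTop
    · exact hψtend
  have hnorm : Tendsto (fun k => ‖v (sn (ψ k))‖) atTop (𝓝 ‖p.2‖) :=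
    ((continuous_norm.comp continuous_snd).continuousAt.tendsto.comp hψtend)
  have hge : τ * ‖g‖ / 4 ≤ ‖p.2‖ :=
    ge_of_tendsto hnorm (Eventually.of_forall fun k => (hkey (ψ k)).2)
  rw [hzero, norm_zero] at hge
  nlinarith
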